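/- arXiv:2408.15131 — 3 statements merged into one kernel-verified Lean document; each statement's English description precedes it below -/
import Mathlib

section
/- For every integer d ≥ 2 and every real a > 0, the integral ∫₀^∞ sinh^{d−1}(r) · exp( −a ∫₀^{r/2} ( cosh²(r)/cosh²(r−t) − 1 )^{(d−1)/2} dt ) dr is finite. -/
/-!
For `0 ≤ t ≤ r` one has `cosh r / cosh (r - t) ≥ eᵗ / 2`, so the inner integrand is at least
`eᵗ / 3` once `t ≥ 2`, and the inner integral over `[0, r/2]` grows like `e^{r/2}`. The factor
`exp (-a ∫ …)` therefore decays doubly exponentially and beats `sinh^{d-1} r ≤ e^{(d-1) r}`.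
-/

open MeasureTheory Real Filter

namespace Real

lemma cosh_le_exp {x : ℝ} (hx : 0 ≤ x) : cosh x ≤ exp x := by
  rw [cosh_eq]
  linarith [exp_le_exp.2 (show -x ≤ x by linarith)]

lemma exp_div_two_le_cosh (x : ℝ) : exp x / 2 ≤ cosh x := by
  rw [cosh_eq]
  linarith [exp_pos (-x)]

lemma sinh_le_exp (x : ℝ) : sinh x ≤ exp x := by
  rw [sinh_eq]
  linarith [exp_pos x, exp_pos (-x)]

lemma exp_div_two_le_cosh_div_cosh_sub {r t : ℝ} (htr : t ≤ r) :
    exp t / 2 ≤ cosh r / cosh (r - t) := by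
  rw [le_div_iff₀ (cosh_pos _)]
  calc exp t / 2 * cosh (r - t) ≤ exp t / 2 * exp (r - t) := by
        gcongr; exact cosh_le_exp (by linarith)
    _ = exp r / 2 := by rw [div_mul_eq_mul_div, ← exp_add, add_sub_cancel]
    _ ≤ cosh r := exp_div_two_le_cosh r

lemma eventually_linear_le_mul_exp_half (c b : ℝ) {a : ℝ} (ha : 0 < a) :
    ∀ᶠ r in atTop, c * r + b ≤ a * exp (r / 2) := by
  filter_upwards [eventually_ge_atTop (max 1 (8 * (|c| + |b|) / a))] with r hr
  have hr1 : 1 ≤ r := le_of_max_le_left hr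
  have hrK : 8 * (|c| + |b|) ≤ a * r := (div_le_iff₀' ha).1 (le_of_max_le_right hr)
  have hquad : r ^ 2 / 8 ≤ exp (r / 2) := by
    linarith [quadratic_le_exp_of_nonneg (show 0 ≤ r / 2 by linarith)]
  have hcb : c * r + b ≤ (|c| + |b|) * r := by
    nlinarith [le_abs_self c, le_abs_self b, abs_nonneg b]
  nlinarith [mul_le_mul_of_nonneg_left hquad ha.le, abs_nonneg c, abs_nonneg b]

end Real

noncomputable def radialKernel (p r t : ℝ) : ℝ :=
  (cosh r ^ 2 / cosh (r - t) ^ 2 - 1) ^ p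

namespace radialKernel

variable {p : ℝ}

lemma continuous_uncurry (hp : 0 ≤ p) : Continuous (Function.uncurry (radialKernel p)) := by
  have hrpow : Continuous fun x : ℝ => x ^ p :=
    continuous_iff_continuousAt.2 fun x => continuousAt_rpow_const x p (Or.inr hp)
  refine hrpow.comp (Continuous.sub (Continuous.div (by fun_prop) (by fun_prop) fun q => ?_)
    continuous_const)
  exact (pow_pos (cosh_pos _) 2).ne'

lemma nonneg {r t : ℝ} (ht : 0 ≤ t) (htr : t ≤ r) : 0 ≤ radialKernel p r t := by
  have hcosh : cosh (r - t) ≤ cosh r := by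
    rw [cosh_le_cosh, abs_of_nonneg (by linarith), abs_of_nonneg (by linarith)]
    linarith
  have hbase : 1 ≤ cosh r ^ 2 / cosh (r - t) ^ 2 := by
    rw [one_le_div (by positivity)]
    gcongr
  exact rpow_nonneg (by linarith) p

lemma exp_div_three_le (hp : 1 / 2 ≤ p) {r t : ℝ} (ht : 2 ≤ t) (htr : t ≤ r) :
    exp t / 3 ≤ radialKernel p r t := by
  set B := cosh r ^ 2 / cosh (r - t) ^ 2 - 1
  have hexp : 9 ≤ exp t ^ 2 := by nlinarith [add_one_le_exp t]
  have hB : exp t ^ 2 / 4 - 1 ≤ B := by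
    have h := pow_le_pow_left₀ (by positivity) (exp_div_two_le_cosh_div_cosh_sub htr) 2
    rw [div_pow, div_pow] at h
    linarith
  calc exp t / 3 = √((exp t / 3) ^ 2) := (sqrt_sq (by positivity)).symm
    _ ≤ √B := sqrt_le_sqrt (by linarith)
    _ = B ^ (1 / 2 : ℝ) := sqrt_eq_rpow B
    _ ≤ B ^ p := rpow_le_rpow_of_exponent_le (by linarith) hp

lemma exp_half_div_three_sub_three_le_integral (hp : 1 / 2 ≤ p) {r : ℝ} (hr : 4 ≤ r) :
    exp (r / 2) / 3 - 3 ≤ ∫ t in (0 : ℝ)..(r / 2), radialKernel p r t := by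
  have hcont : Continuous (radialKernel p r) :=
    (continuous_uncurry (by linarith)).uncurry_left r
  have hhead : 0 ≤ ∫ t in (0 : ℝ)..2, radialKernel p r t :=
    intervalIntegral.integral_nonneg zero_le_two fun t ht => nonneg ht.1 (by linarith [ht.2])
  have htail : (exp (r / 2) - exp 2) / 3 ≤ ∫ t in (2 : ℝ)..(r / 2), radialKernel p r t := by
    rw [← integral_exp, ← intervalIntegral.integral_div]
    exact intervalIntegral.integral_mono_on (by linarith)
      ((continuous_exp.div_const 3).intervalIntegrable _ _)
      (hcont.intervalIntegrable _ _) fun t ht => exp_div_three_le hp ht.1 (by linarith [ht.2])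
  have hexp2 : exp 2 ≤ 9 := by
    have h := exp_one_lt_d9
    rw [show (2 : ℝ) = 1 + 1 by norm_num, exp_add]
    nlinarith [exp_pos 1]
  rw [← intervalIntegral.integral_add_adjacent_intervals (hcont.intervalIntegrable 0 2)
    (hcont.intervalIntegrable 2 (r / 2))]
  linarith

end radialKernel

lemma eventually_sinh_pow_mul_exp_le_exp_neg (n : ℕ) {a : ℝ} (ha : 0 < a) :
    ∀ᶠ r in atTop, sinh r ^ n * exp (-a * (exp (r / 2) / 3 - 3)) ≤ exp (-r) := by
  filter_upwards [eventually_ge_atTop 0,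
    eventually_linear_le_mul_exp_half (n + 1) (3 * a) (div_pos ha three_pos)] with r hr hlin
  calc sinh r ^ n * exp (-a * (exp (r / 2) / 3 - 3))
      ≤ exp r ^ n * exp (-a * (exp (r / 2) / 3 - 3)) := by
        gcongr
        exact sinh_le_exp r
    _ = exp (n * r - a * (exp (r / 2) / 3 - 3)) := by
        rw [← exp_nat_mul, ← exp_add]; ring_nf
    _ ≤ exp (-r) := exp_le_exp.2 (by linarith)

/-- For every integer `d ≥ 2` and every real `a > 0`, the integral
`∫₀^∞ sinh^{d−1}(r) · exp(−a ∫₀^{r/2} (cosh²(r)/cosh²(r−t) − 1)^{(d−1)/2} dt) dr`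
is finite. -/
theorem stmt0 (d : ℕ) (hd : 2 ≤ d) (a : ℝ) (ha : 0 < a) :
    IntegrableOn
      (fun r : ℝ =>
        Real.sinh r ^ (d - 1) *
          Real.exp (-a * ∫ t in (0:ℝ)..(r / 2),
            ((Real.cosh r) ^ 2 / (Real.cosh (r - t)) ^ 2 - 1) ^ (((d : ℝ) - 1) / 2)))
      (Set.Ioi (0 : ℝ)) := by
  have hp : 1 / 2 ≤ ((d : ℝ) - 1) / 2 := by
    have : (2 : ℝ) ≤ d := by exact_mod_cast hd
    linarith
  set p : ℝ := ((d : ℝ) - 1) / 2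
  change IntegrableOn (fun r => sinh r ^ (d - 1) *
    exp (-a * ∫ t in (0 : ℝ)..(r / 2), radialKernel p r t)) (Set.Ioi 0)
  have hcont : Continuous fun r => sinh r ^ (d - 1) *
      exp (-a * ∫ t in (0 : ℝ)..(r / 2), radialKernel p r t) := by
    have := (radialKernel.continuous_uncurry (by linarith : 0 ≤ p))
    fun_prop
  refine integrable_of_isBigO_exp_neg one_pos hcont.continuousOn (Asymptotics.IsBigO.of_bound 1 ?_)
  filter_upwards [eventually_ge_atTop 4, eventually_sinh_pow_mul_exp_le_exp_neg (d - 1) ha]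
    with r hr hdecay
  have hinner := radialKernel.exp_half_div_three_sub_three_le_integral hp hr
  have hsinh : 0 ≤ sinh r ^ (d - 1) := pow_nonneg (sinh_nonneg_iff.2 (by linarith)) _
  rw [one_mul, neg_one_mul, norm_of_nonneg (exp_pos _).le,
    norm_of_nonneg (mul_nonneg hsinh (exp_pos _).le)]
  refine le_trans (mul_le_mul_of_nonneg_left (exp_le_exp.2 ?_) hsinh) hdecay
  nlinarith [mul_le_mul_of_nonneg_left hinner ha.le]
end

section
/- For every integer d ≥ 2 and all reals γ > 0: lim_{κ→0⁺} γ ω_d ∫₀^∞ κ^{−(d−1)/2} sinh^{d−1}(√κ r) · exp( −2γ κ_{d−1} ∫₀^{r/2} κ^{−(d−1)/2} ( cosh²(√κ r)/cosh²(√κ (r−t)) − 1 )^{(d−1)/2} dt ) dr = γ ω_d ∫₀^∞ r^{d−1} exp( −2γ κ_{d−1} β_d r^d ) dr. -/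
open MeasureTheory Real Filter

/-- `ω_k`, the surface area of the (k−1)-dimensional Euclidean unit sphere. -/
noncomputable def omegaS (k : ℕ) : ℝ := 2 * Real.pi ^ ((k : ℝ) / 2) / Real.Gamma ((k : ℝ) / 2)

/-- `κ_k`, the volume of the k-dimensional Euclidean unit ball. -/
noncomputable def kappaV (k : ℕ) : ℝ := omegaS k / k

/-- `β_d := ∫₀^{1/2} (1 − (1−t)²)^{(d−1)/2} dt`. -/
noncomputable def betaD (d : ℕ) : ℝ :=
  ∫ t in (0:ℝ)..(1 / 2), (1 - (1 - t) ^ 2) ^ (((d : ℝ) - 1) / 2)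

/-!
Put `s = √κ` and `c = 2γκ_{d-1}`. The hyperbolic integrand becomes
`(sinh (s r) / s)^(d-1) · exp (-c V_s(r))`, where
`V_s(r) = ∫₀^{r/2} (sinh (s (2r - t)) sinh (s t) / (s cosh (s (r - t)))²)^{(d-1)/2} dt`,
because `cosh² a - cosh² b = sinh (a + b) sinh (a - b)`. As `s → 0⁺` the integrand of `V_s(r)` tends
to `((2r - t) t)^{(d-1)/2}`, whose integral is `β_d r^d`; on `[0, r/2]` it is bounded uniformly in
`s ≤ 1`. For the outer integral, dominated convergence over `0 < s ≤ 1` rests on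
`sinh (s r) / s ≤ r e^r` and, for `r ≥ 2`, on `V_s(r) ≥ C r^{(d+1)/2}`, which follows from
`sinh (s (2r - t)) sinh (s t) ≥ (2 / cosh 1) s² t cosh² (s (r - t))`; the superlinear exponent
beats the `e^{(d-1) r}` growth of the prefactor.
-/

open Set Topology

noncomputable section

def sinhScaled (s x : ℝ) : ℝ := sinh (s * x) / s

def lensBase (s r t : ℝ) : ℝ := sinhScaled s (2 * r - t) * sinhScaled s t / cosh (s * (r - t)) ^ 2

def lensDensity (p s r t : ℝ) : ℝ := lensBase s r t ^ p

def lensVolume (p s r : ℝ) : ℝ := ∫ t in 0..r / 2, lensDensity p s r t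

def degreeIntegrand (n : ℕ) (p c s r : ℝ) : ℝ :=
  sinhScaled s r ^ n * exp (-c * lensVolume p s r)

end

lemma sinh_le_mul_exp (x : ℝ) : sinh x ≤ x * exp x := by
  have h := add_one_le_exp (-(2 * x))
  have hx' : exp (-x) = exp x * exp (-(2 * x)) := by rw [← exp_add]; ring_nf
  rw [sinh_eq, hx']
  nlinarith [exp_pos x]

lemma tendsto_sinhScaled (x : ℝ) : Tendsto (fun s => sinhScaled s x) (𝓝[>] 0) (𝓝 x) := by
  have h : HasDerivAt (fun s => sinh (s * x)) x 0 := by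
    simpa using ((hasDerivAt_id (0 : ℝ)).mul_const x).sinh
  refine (hasDerivAt_iff_tendsto_slope.1 h).mono_left
    (nhdsWithin_mono _ fun s hs => ne_of_gt hs) |>.congr fun s => ?_
  simp [slope_def_field, sinhScaled]

lemma continuous_sinhScaled (s : ℝ) : Continuous (sinhScaled s) := by
  unfold sinhScaled; fun_prop

lemma sinhScaled_nonneg {s x : ℝ} (hs : 0 < s) (hx : 0 ≤ x) : 0 ≤ sinhScaled s x :=
  div_nonneg (sinh_nonneg_iff.2 (by positivity)) hs.le

lemma sinhScaled_le_mul_exp {s x : ℝ} (hs : 0 < s) (hs1 : s ≤ 1) (hx : 0 ≤ x) :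
    sinhScaled s x ≤ x * exp x := by
  rw [sinhScaled, div_le_iff₀ hs]
  have : exp (s * x) ≤ exp x := exp_le_exp.2 (by nlinarith)
  calc sinh (s * x) ≤ s * x * exp (s * x) := sinh_le_mul_exp _
    _ ≤ x * exp x * s := by nlinarith [mul_nonneg hs.le hx]

lemma tendsto_lensBase (r t : ℝ) :
    Tendsto (fun s => lensBase s r t) (𝓝[>] 0) (𝓝 ((2 * r - t) * t)) := by
  have hcosh : Tendsto (fun s : ℝ => cosh (s * (r - t)) ^ 2) (𝓝[>] 0) (𝓝 1) := by
    have : Continuous fun s : ℝ => cosh (s * (r - t)) ^ 2 := by fun_prop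
    simpa using (this.tendsto 0).mono_left nhdsWithin_le_nhds
  simpa [lensBase, Pi.div_def] using
    ((tendsto_sinhScaled _).mul (tendsto_sinhScaled _)).div hcosh one_ne_zero

lemma continuous_lensBase (s : ℝ) : Continuous fun q : ℝ × ℝ => lensBase s q.1 q.2 := by
  have := continuous_sinhScaled s
  unfold lensBase
  fun_prop (disch := intros; positivity)

lemma lensBase_nonneg {s r t : ℝ} (hs : 0 < s) (ht : 0 ≤ t) (htr : t ≤ 2 * r) :
    0 ≤ lensBase s r t :=
  div_nonneg (mul_nonneg (sinhScaled_nonneg hs (by linarith)) (sinhScaled_nonneg hs ht))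
    (by positivity)

lemma lensBase_le {s r t : ℝ} (hs : 0 < s) (hs1 : s ≤ 1) (ht : 0 ≤ t) (htr : t ≤ 2 * r) :
    lensBase s r t ≤ r ^ 2 * exp (2 * r) := by
  have h₁ := sinhScaled_le_mul_exp hs hs1 (by linarith : 0 ≤ 2 * r - t)
  have h₂ := sinhScaled_le_mul_exp hs hs1 ht
  have h₃ : 1 ≤ cosh (s * (r - t)) ^ 2 := one_le_pow₀ (one_le_cosh _)
  calc lensBase s r t ≤ sinhScaled s (2 * r - t) * sinhScaled s t :=
        div_le_self (mul_nonneg (sinhScaled_nonneg hs (by linarith)) (sinhScaled_nonneg hs ht)) h₃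
    _ ≤ (2 * r - t) * exp (2 * r - t) * (t * exp t) :=
        mul_le_mul h₁ h₂ (sinhScaled_nonneg hs ht) (by positivity)
    _ = (2 * r - t) * t * exp (2 * r) := by rw [mul_mul_mul_comm, ← exp_add]; ring_nf
    _ ≤ r ^ 2 * exp (2 * r) := by gcongr; nlinarith [sq_nonneg (r - t)]

lemma mul_cosh_div_cosh_one_le_sinh {s u : ℝ} (hs : 0 < s) (hs1 : s ≤ 1) (hsu : s ≤ u) :
    s * cosh u / cosh 1 ≤ sinh u := by
  rw [div_le_iff₀ (cosh_pos 1)]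
  have h₁ : sinh s * cosh u ≤ sinh u * cosh s := by
    have := sinh_nonneg_iff.2 (sub_nonneg.2 hsu)
    rw [sinh_sub] at this; linarith
  have h₂ : s ≤ sinh s := self_le_sinh_iff.2 hs.le
  have h₃ : cosh s ≤ cosh 1 := cosh_le_cosh.2 (by rw [abs_of_pos hs, abs_one]; exact hs1)
  have h₄ : 0 ≤ sinh u := sinh_nonneg_iff.2 (hs.le.trans hsu)
  nlinarith [cosh_pos u]

lemma le_lensBase {s r t : ℝ} (hs : 0 < s) (hs1 : s ≤ 1) (ht : 0 ≤ t) (htr : t ≤ r / 2)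
    (hr : 2 ≤ r) : 2 / cosh 1 * t ≤ lensBase s r t := by
  set u := s * (r - t) with hu_def
  have hu : s ≤ u := le_mul_of_one_le_right hs.le (by linarith)
  have hcu := cosh_pos u
  have h2u : sinh (2 * u) ≤ sinh (s * (2 * r - t)) := sinh_le_sinh.2 (by nlinarith)
  have hst : s * t ≤ sinh (s * t) := self_le_sinh_iff.2 (by positivity)
  have hsinhu := mul_cosh_div_cosh_one_le_sinh hs hs1 hu
  have hbase : lensBase s r t = sinh (s * (2 * r - t)) * sinh (s * t) / (s ^ 2 * cosh u ^ 2) := by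
    simp only [lensBase, sinhScaled, hu_def]; field_simp
  rw [hbase, le_div_iff₀ (by positivity)]
  calc 2 / cosh 1 * t * (s ^ 2 * cosh u ^ 2) = 2 * (s * cosh u / cosh 1) * cosh u * (s * t) := by
        ring
    _ ≤ 2 * sinh u * cosh u * (s * t) := by gcongr
    _ = sinh (2 * u) * (s * t) := by rw [sinh_two_mul]
    _ ≤ sinh (s * (2 * r - t)) * sinh (s * t) :=
        mul_le_mul h2u hst (by positivity) (sinh_nonneg_iff.2 (by nlinarith) |>.trans h2u)

lemma continuous_lensDensity {p : ℝ} (hp : 0 ≤ p) (s : ℝ) :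
    Continuous fun q : ℝ × ℝ => lensDensity p s q.1 q.2 :=
  (continuous_lensBase s).rpow_const fun _ => Or.inr hp

lemma continuous_lensDensity_right {p : ℝ} (hp : 0 ≤ p) (s r : ℝ) :
    Continuous (lensDensity p s r) :=
  ((continuous_lensDensity hp s).comp (Continuous.prodMk_right r)).congr fun _ => rfl

lemma lensVolume_nonneg {p s r : ℝ} (hs : 0 < s) (hr : 0 ≤ r) : 0 ≤ lensVolume p s r :=
  intervalIntegral.integral_nonneg (by linarith) fun t ht =>
    rpow_nonneg (lensBase_nonneg hs ht.1 (by linarith [ht.2])) p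

lemma integral_two_mul_sub_mul_rpow (p : ℝ) {r : ℝ} (hr : 0 < r) :
    ∫ t in 0..r / 2, ((2 * r - t) * t) ^ p =
      r ^ (2 * p + 1) * ∫ t in (0 : ℝ)..1 / 2, (1 - (1 - t) ^ 2) ^ p := by
  have hscale := intervalIntegral.smul_integral_comp_mul_left
    (fun t : ℝ => ((2 * r - t) * t) ^ p) r (a := 0) (b := 1 / 2)
  rw [mul_zero, mul_one_div, smul_eq_mul] at hscale
  have hpoint : EqOn (fun u => ((2 * r - r * u) * (r * u)) ^ p)
      (fun u => r ^ (2 * p) * (1 - (1 - u) ^ 2) ^ p) (uIcc 0 (1 / 2)) := fun u hu => by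
    rw [uIcc_of_le (by norm_num)] at hu
    have hu' : 0 ≤ 1 - (1 - u) ^ 2 := by nlinarith [hu.1, hu.2]
    simp only
    rw [show (2 * r - r * u) * (r * u) = r ^ 2 * (1 - (1 - u) ^ 2) by ring,
      mul_rpow (sq_nonneg r) hu', ← rpow_natCast, ← rpow_mul hr.le]
    norm_num
  rw [← hscale, intervalIntegral.integral_congr hpoint, intervalIntegral.integral_const_mul,
    rpow_add hr, rpow_one]
  ring

lemma tendsto_lensVolume {p r : ℝ} (hp : 0 ≤ p) (hr : 0 ≤ r) :
    Tendsto (fun s => lensVolume p s r) (𝓝[>] 0) (𝓝 (∫ t in 0..r / 2, ((2 * r - t) * t) ^ p)) := by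
  refine intervalIntegral.tendsto_integral_filter_of_dominated_convergence
    (fun _ => (r ^ 2 * exp (2 * r)) ^ p) ?_ ?_ intervalIntegrable_const ?_
  · exact .of_forall fun s => (continuous_lensDensity_right hp s r).aestronglyMeasurable
  · filter_upwards [Ioc_mem_nhdsGT zero_lt_one] with s hs
    refine .of_forall fun t ht => ?_
    rw [uIoc_of_le (by linarith)] at ht
    have hbase := lensBase_nonneg hs.1 ht.1.le (by linarith [ht.2])
    rw [lensDensity, norm_of_nonneg (rpow_nonneg hbase p)]
    exact rpow_le_rpow hbase (lensBase_le hs.1 hs.2 ht.1.le (by linarith [ht.2])) hp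
  · exact .of_forall fun t _ => (tendsto_lensBase r t).rpow_const (Or.inr hp)

lemma integral_mul_rpow {p K b : ℝ} (hp : -1 < p) (hK : 0 ≤ K) (hb : 0 ≤ b) :
    ∫ t in 0..b, (K * t) ^ p = K ^ p * b ^ (p + 1) / (p + 1) := by
  have hpoint : EqOn (fun t => (K * t) ^ p) (fun t => K ^ p * t ^ p) (uIcc 0 b) := fun t ht => by
    rw [uIcc_of_le hb] at ht
    exact mul_rpow hK ht.1
  rw [intervalIntegral.integral_congr hpoint, intervalIntegral.integral_const_mul,
    integral_rpow (Or.inl hp), zero_rpow (by linarith)]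
  ring

lemma exists_mul_rpow_le_lensVolume {p : ℝ} (hp : 0 ≤ p) :
    ∃ C > 0, ∀ s r, 0 < s → s ≤ 1 → 0 ≤ r → C * (r ^ (p + 1) - 2 ^ (p + 1)) ≤ lensVolume p s r := by
  have hK : 0 < 2 / cosh 1 := div_pos two_pos (cosh_pos 1)
  refine ⟨(2 / cosh 1) ^ p / (p + 1) / 2 ^ (p + 1), by positivity, fun s r hs hs1 hr => ?_⟩
  rcases lt_or_ge r 2 with hr2 | hr2
  · refine le_trans ?_ (lensVolume_nonneg hs hr)
    exact mul_nonpos_of_nonneg_of_nonpos (by positivity)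
      (sub_nonpos.2 (rpow_le_rpow hr hr2.le (by linarith)))
  calc _ ≤ (2 / cosh 1) ^ p / (p + 1) / 2 ^ (p + 1) * r ^ (p + 1) := by
        gcongr; exact sub_le_self _ (by positivity)
    _ = ∫ t in 0..r / 2, (2 / cosh 1 * t) ^ p := by
        rw [integral_mul_rpow (by linarith) hK.le (by linarith), div_rpow hr zero_le_two]; ring
    _ ≤ lensVolume p s r := by
      refine intervalIntegral.integral_mono_on (by linarith)
        (Continuous.intervalIntegrable (by fun_prop (disch := exact hp)) _ _)
        ((continuous_lensDensity_right hp s r).intervalIntegrable _ _) fun t ht => ?_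
      exact rpow_le_rpow (mul_nonneg hK.le ht.1) (le_lensBase hs hs1 ht.1 ht.2 hr2) hp

lemma exists_mul_sub_mul_rpow_le (A : ℝ) {b q : ℝ} (hb : 0 < b) (hq : 1 < q) :
    ∃ B, ∀ r, 0 ≤ r → A * r - b * r ^ q ≤ B := by
  set R := max 1 ((|A| / b) ^ (q - 1)⁻¹)
  have hR : 0 < R := lt_max_of_lt_left one_pos
  refine ⟨|A| * R, fun r hr => ?_⟩
  rcases le_total r R with hrR | hRr
  · nlinarith [le_abs_self A, abs_nonneg A, rpow_nonneg hr q]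
  · have hpow : |A| / b ≤ r ^ (q - 1) :=
      calc |A| / b = ((|A| / b) ^ (q - 1)⁻¹) ^ (q - 1) :=
            (rpow_inv_rpow (by positivity) (by linarith)).symm
        _ ≤ r ^ (q - 1) := rpow_le_rpow (by positivity) ((le_max_right _ _).trans hRr) (by linarith)
    have hrq : r ^ q = r ^ (q - 1) * r := by
      rw [← rpow_add_one (hR.trans_le hRr).ne', sub_add_cancel]
    rw [div_le_iff₀ hb] at hpow
    nlinarith [le_abs_self A, abs_nonneg A]

lemma integrableOn_pow_mul_exp_mul_sub_mul_rpow (n : ℕ) (A : ℝ) {b q : ℝ} (hb : 0 < b)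
    (hq : 1 < q) : IntegrableOn (fun r => r ^ n * exp (A * r - b * r ^ q)) (Ioi 0) := by
  obtain ⟨B, hB⟩ := exists_mul_sub_mul_rpow_le (A + 1) hb hq
  have hmajor : IntegrableOn (fun r : ℝ => exp B * (r ^ n * exp (-r))) (Ioi 0) := by
    refine IntegrableOn.congr_fun (Integrable.const_mul (integrableOn_rpow_mul_exp_neg_mul_rpow
      (s := n) (by linarith [n.cast_nonneg (α := ℝ)]) one_pos one_pos) (exp B))
      (fun r _ => ?_) measurableSet_Ioi
    simp
  refine hmajor.mono' (by fun_prop) ((ae_restrict_iff' measurableSet_Ioi).2 (.of_forall ?_))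
  intro r hr
  have hr : 0 < r := hr
  rw [norm_of_nonneg (by positivity), mul_left_comm, ← exp_add]
  gcongr
  linarith [hB r hr.le]

lemma continuous_degreeIntegrand (n : ℕ) {p : ℝ} (hp : 0 ≤ p) (c s : ℝ) :
    Continuous (degreeIntegrand n p c s) := by
  have hvol : Continuous (lensVolume p s) :=
    intervalIntegral.continuous_parametric_intervalIntegral_of_continuous
      (continuous_lensDensity hp s) (continuous_id.div_const 2)
  have := continuous_sinhScaled s
  unfold degreeIntegrand
  fun_prop

lemma norm_degreeIntegrand_le (n : ℕ) {p c C s r : ℝ} (hc : 0 ≤ c) (hs : 0 < s) (hs1 : s ≤ 1)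
    (hr : 0 ≤ r) (hC : C * (r ^ (p + 1) - 2 ^ (p + 1)) ≤ lensVolume p s r) :
    ‖degreeIntegrand n p c s r‖ ≤
      exp (c * C * 2 ^ (p + 1)) * (r ^ n * exp (n * r - c * C * r ^ (p + 1))) := by
  have hsinh : sinhScaled s r ^ n ≤ r ^ n * exp (n * r) := by
    rw [exp_nat_mul, ← mul_pow]
    exact pow_le_pow_left₀ (sinhScaled_nonneg hs hr) (sinhScaled_le_mul_exp hs hs1 hr) n
  have hexp : exp (-c * lensVolume p s r) ≤ exp (c * C * 2 ^ (p + 1) - c * C * r ^ (p + 1)) :=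
    exp_le_exp.2 (by nlinarith)
  rw [degreeIntegrand, norm_of_nonneg (by have := sinhScaled_nonneg hs hr; positivity)]
  calc _ ≤ r ^ n * exp (n * r) * exp (c * C * 2 ^ (p + 1) - c * C * r ^ (p + 1)) :=
        mul_le_mul hsinh hexp (exp_pos _).le (by positivity)
    _ = _ := by rw [mul_left_comm, mul_assoc, ← exp_add, ← exp_add]; ring_nf

lemma tendsto_degreeIntegrand (n : ℕ) {p : ℝ} (hp : 0 ≤ p) (c : ℝ) {r : ℝ} (hr : 0 < r) :
    Tendsto (fun s => degreeIntegrand n p c s r) (𝓝[>] 0)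
      (𝓝 (r ^ n * exp (-(c * ∫ t in (0 : ℝ)..1 / 2, (1 - (1 - t) ^ 2) ^ p) * r ^ (2 * p + 1)))) := by
  have hvol := tendsto_lensVolume hp hr.le
  rw [integral_two_mul_sub_mul_rpow p hr] at hvol
  convert ((tendsto_sinhScaled r).pow n).mul ((hvol.const_mul (-c)).rexp) using 2
  · rfl
  · ring_nf

theorem tendsto_integral_degreeIntegrand (n : ℕ) {p c : ℝ} (hp : 0 < p) (hc : 0 < c) :
    Tendsto (fun s => ∫ r in Ioi 0, degreeIntegrand n p c s r) (𝓝[>] 0)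
      (𝓝 (∫ r in Ioi 0,
        r ^ n * exp (-(c * ∫ t in (0 : ℝ)..1 / 2, (1 - (1 - t) ^ 2) ^ p) * r ^ (2 * p + 1)))) := by
  obtain ⟨C, hC, hvol⟩ := exists_mul_rpow_le_lensVolume hp.le
  refine tendsto_integral_filter_of_dominated_convergence _
    (.of_forall fun s => (continuous_degreeIntegrand n hp.le c s).aestronglyMeasurable) ?_
    ((integrableOn_pow_mul_exp_mul_sub_mul_rpow n n (b := c * C) (q := p + 1) (by positivity)
      (by linarith)).const_mul (exp (c * C * 2 ^ (p + 1))))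
    ((ae_restrict_iff' measurableSet_Ioi).2 (.of_forall fun r hr =>
      tendsto_degreeIntegrand n hp.le c hr))
  filter_upwards [Ioc_mem_nhdsGT zero_lt_one] with s hs
  refine (ae_restrict_iff' measurableSet_Ioi).2 (.of_forall fun r hr => ?_)
  exact norm_degreeIntegrand_le n hc.le hs.1 hs.2 (le_of_lt hr) (hvol s r hs.1 hs.2 (le_of_lt hr))

lemma cosh_sq_sub_cosh_sq (x y : ℝ) : cosh x ^ 2 - cosh y ^ 2 = sinh (x + y) * sinh (x - y) := by
  rw [sinh_add, sinh_sub]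
  nlinarith [cosh_sq_sub_sinh_sq x, cosh_sq_sub_sinh_sq y]

lemma rpow_neg_div_two_mul_sinh_pow (n : ℕ) {κ : ℝ} (hκ : 0 < κ) (x : ℝ) :
    κ ^ (-(n : ℝ) / 2) * sinh (√κ * x) ^ n = sinhScaled (√κ) x ^ n := by
  have h : κ ^ (-(n : ℝ) / 2) = (√κ ^ n)⁻¹ := by
    rw [sqrt_eq_rpow, ← rpow_natCast, ← rpow_mul hκ.le, ← rpow_neg hκ.le]
    ring_nf
  rw [h, sinhScaled, div_pow, inv_mul_eq_div]

lemma rpow_neg_div_two_mul_cosh_sq_div_sub_one_rpow (q : ℝ) {κ r t : ℝ} (hκ : 0 < κ)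
    (ht : 0 ≤ t) (htr : t ≤ 2 * r) :
    κ ^ (-q / 2) * (cosh (√κ * r) ^ 2 / cosh (√κ * (r - t)) ^ 2 - 1) ^ (q / 2) =
      lensDensity (q / 2) (√κ) r t := by
  have hs : 0 < √κ := sqrt_pos.2 hκ
  have hbase : cosh (√κ * r) ^ 2 / cosh (√κ * (r - t)) ^ 2 - 1 = κ * lensBase (√κ) r t := by
    have hsub := cosh_sq_sub_cosh_sq (√κ * r) (√κ * (r - t))
    rw [show √κ * r + √κ * (r - t) = √κ * (2 * r - t) by ring,
      show √κ * r - √κ * (r - t) = √κ * t by ring] at hsub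
    rw [lensBase, sinhScaled, sinhScaled]
    field_simp
    rw [sq_sqrt hκ.le, hsub, mul_comm r 2, mul_assoc]
  rw [hbase, mul_rpow hκ.le (lensBase_nonneg hs ht htr), ← mul_assoc, ← rpow_add hκ, neg_div,
    neg_add_cancel, rpow_zero, one_mul, lensDensity]

lemma tendsto_sqrt_nhdsGT_zero : Tendsto (√·) (𝓝[>] 0) (𝓝[>] 0) :=
  tendsto_nhdsWithin_iff.2
    ⟨(continuous_sqrt.tendsto' 0 0 sqrt_zero).mono_left nhdsWithin_le_nhds,
      eventually_nhdsWithin_of_forall fun _ hκ => sqrt_pos.2 hκ⟩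

lemma kappaV_pos {k : ℕ} (hk : 0 < k) : 0 < kappaV k := by
  have : 0 < Gamma ((k : ℝ) / 2) := Gamma_pos_of_pos (by positivity)
  unfold kappaV omegaS
  positivity

/-- as the curvature parameter `κ → 0⁺`, the expected degree of the origin in
the hyperbolic radial spanning tree converges to the Euclidean expected degree. -/
theorem stmt1 (d : ℕ) (hd : 2 ≤ d) (γ : ℝ) (hγ : 0 < γ) :
    Tendsto
      (fun κ : ℝ =>
        γ * omegaS d *
          ∫ r in Set.Ioi (0:ℝ),
            κ ^ (-((d : ℝ) - 1) / 2) * Real.sinh (Real.sqrt κ * r) ^ (d - 1) *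
              Real.exp (-(2 * γ * kappaV (d - 1)) *
                ∫ t in (0:ℝ)..(r / 2),
                  κ ^ (-((d : ℝ) - 1) / 2) *
                    ((Real.cosh (Real.sqrt κ * r)) ^ 2 /
                        (Real.cosh (Real.sqrt κ * (r - t))) ^ 2 - 1) ^ (((d : ℝ) - 1) / 2)))
      (nhdsWithin 0 (Set.Ioi 0))
      (nhds (γ * omegaS d *
        ∫ r in Set.Ioi (0:ℝ),
          r ^ (d - 1) * Real.exp (-(2 * γ * kappaV (d - 1) * betaD d) * r ^ d))) := by
  obtain ⟨n, rfl⟩ : ∃ n, d = n + 1 := ⟨d - 1, by omega⟩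
  have hn : 0 < n := by omega
  have hc : 0 < 2 * γ * kappaV n := by have := kappaV_pos hn; positivity
  have hβ : ∫ t in (0 : ℝ)..1 / 2, (1 - (1 - t) ^ 2) ^ ((n : ℝ) / 2) = betaD (n + 1) := by
    simp [betaD]
  have hpow (r : ℝ) : r ^ (2 * ((n : ℝ) / 2) + 1) = r ^ (n + 1) := by
    rw [← rpow_natCast]; push_cast; ring_nf
  have hlim := (tendsto_integral_degreeIntegrand n (p := n / 2) (by positivity) hc).comp
    tendsto_sqrt_nhdsGT_zero
  simp only [hβ, hpow] at hlim
  simp only [Nat.cast_add, Nat.cast_one, add_sub_cancel_right, add_tsub_cancel_right]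
  refine (hlim.const_mul _).congr' ?_
  filter_upwards [self_mem_nhdsWithin] with κ hκ
  refine congrArg _ (setIntegral_congr_fun measurableSet_Ioi fun r hr => ?_)
  dsimp only
  rw [degreeIntegrand, ← rpow_neg_div_two_mul_sinh_pow n hκ, lensVolume]
  congr 3
  refine intervalIntegral.integral_congr fun t ht => ?_
  rw [uIcc_of_le (by linarith [hr.out])] at ht
  exact (rpow_neg_div_two_mul_cosh_sq_div_sub_one_rpow n hκ ht.1 (by linarith [ht.2, hr.out])).symm
end

section
/- For every integer n ≥ 3 and every real κ > 0, setting r := (1 + 2/√κ) · log n, one has (2/√κ) · arsinh( sinh(√κ r) · sin(π/n) ) > r. -/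
/-!
With `ρ := √κ r = (√κ + 2) log n` the claim reads `ρ / 2 < arsinh (sinh ρ · sin (π / n))`.
Since `sinh ρ = 2 sinh (ρ / 2) cosh (ρ / 2)`, it suffices that `2 cosh (ρ / 2) sin (π / n) > 1`,
and indeed `2 cosh (ρ / 2) > exp (ρ / 2) ≥ n` while `n sin (π / n) ≥ 2` by Jordan's inequality.
-/

open Real

lemma two_le_mul_sin_pi_div {x : ℝ} (hx : 2 ≤ x) : 2 ≤ x * sin (π / x) := by
  have hx0 : 0 < x := by linarith
  have jordan : 2 / π * (π / x) ≤ sin (π / x) :=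
    mul_le_sin (by positivity) (div_le_div_of_nonneg_left pi_pos.le two_pos hx)
  calc 2 = x * (2 / π * (π / x)) := by field_simp
    _ ≤ x * sin (π / x) := mul_le_mul_of_nonneg_left jordan hx0.le

lemma exp_lt_two_mul_cosh (x : ℝ) : exp x < 2 * cosh x := by
  linarith [cosh_add_sinh x, sinh_lt_cosh x]

lemma half_lt_arsinh_sinh_mul {ρ c : ℝ} (hρ : 0 < ρ) (hc : 1 < 2 * cosh (ρ / 2) * c) :
    ρ / 2 < arsinh (sinh ρ * c) := by
  have hsinh : 0 < sinh (ρ / 2) := sinh_pos_iff.2 (half_pos hρ)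
  have hdouble : sinh ρ * c = sinh (ρ / 2) * (2 * cosh (ρ / 2) * c) :=
    calc sinh ρ * c = sinh (2 * (ρ / 2)) * c := by rw [mul_div_cancel₀ ρ two_ne_zero]
      _ = sinh (ρ / 2) * (2 * cosh (ρ / 2) * c) := by rw [sinh_two_mul]; ring
  rw [← sinh_lt_sinh, sinh_arsinh, hdouble]
  exact lt_mul_of_one_lt_right hsinh hc

/-- for every integer `n ≥ 3` and real `κ > 0`, with
`r := (1 + 2/√κ) · log n`, one has `(2/√κ) · arsinh(sinh(√κ r) · sin(π/n)) > r`. -/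
theorem stmt9 (n : ℕ) (hn : 3 ≤ n) (κ : ℝ) (hκ : 0 < κ) :
    (2 / Real.sqrt κ) *
        Real.arsinh (Real.sinh (Real.sqrt κ * ((1 + 2 / Real.sqrt κ) * Real.log n)) *
          Real.sin (Real.pi / n))
      > (1 + 2 / Real.sqrt κ) * Real.log n := by
  set a := √κ
  have ha : 0 < a := sqrt_pos.2 hκ
  have hn2 : (2 : ℝ) ≤ n := by exact_mod_cast (by omega : 2 ≤ n)
  have hlog : 0 < log n := log_pos (by linarith)
  have hn_lt_cosh : (n : ℝ) < 2 * cosh ((a + 2) * log n / 2) :=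
    calc (n : ℝ) = exp (log n) := (exp_log (by positivity)).symm
      _ ≤ exp ((a + 2) * log n / 2) := exp_le_exp.2 (by nlinarith)
      _ < 2 * cosh ((a + 2) * log n / 2) := exp_lt_two_mul_cosh _
  have hsin : 0 < sin (π / n) :=
    sin_pos_of_pos_of_lt_pi (by positivity) (div_lt_self pi_pos (by linarith))
  have key := half_lt_arsinh_sinh_mul (c := sin (π / n)) (by positivity : 0 < (a + 2) * log n)
    (by nlinarith [two_le_mul_sin_pi_div hn2])
  have hρ : a * ((1 + 2 / a) * log n) = (a + 2) * log n := by field_simp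
  rw [hρ, gt_iff_lt]
  calc (1 + 2 / a) * log n = 2 / a * ((a + 2) * log n / 2) := by field_simp
    _ < 2 / a * arsinh (sinh ((a + 2) * log n) * sin (π / n)) :=
      mul_lt_mul_of_pos_left key (by positivity)
end
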